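/- Let r ∈ ℝⁿ and let ȳ, y, f ∈ ℝⁿ satisfy r = f − y. Suppose ‖f − ȳ_s‖₂ ≤ (5/8)(1−2ρ) + 1/24, ȳ_s = α_s ȳ + (1−α_s) z with z_i ỹ_i = 1 for all i (z = ỹ), ȳ_i ỹ_i ≥ 1 − 2ρ, ỹ ∈ {−1,+1}ⁿ, 0 ≤ ρ < 1/2, and 0 ≤ α_s ≤ 1/(24√n) ≤ 1/24. Then for every i, f_i ỹ_i ≥ 1 − 2α_s − (5/8)(1−2ρ) − 1/24 ≥ (1−2ρ)/4. -/
import Mathlib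

open scoped BigOperators

lemma coord_le_norm {n : ℕ} (v : EuclideanSpace ℝ (Fin n)) (i : Fin n) :
    |v i| ≤ ‖v‖ := by
  rw [EuclideanSpace.norm_eq]
  rw [← Real.sqrt_sq_eq_abs]
  apply Real.sqrt_le_sqrt
  have : v i ^ 2 = ‖v i‖ ^ 2 := by simp [sq_abs]
  rw [this]
  exact Finset.single_le_sum (f := fun j => ‖v j‖ ^ 2) (fun j _ => sq_nonneg _) (Finset.mem_univ i)

/-- Second-stage margin argument: once the interpolation weight `α_s` is at
most `1/(24√n) ≤ 1/24` and the self-distillation labels equal the true labels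
(`z = ỹ`), closeness of the network output `f` to the target `ȳ_s` implies a
ground-truth margin of at least `(1−2ρ)/4`. -/
theorem stmt_19 (n : ℕ) (hn : 1 ≤ n)
    (ρ αs : ℝ) (hρ0 : 0 ≤ ρ) (hρ : ρ < 1 / 2)
    (f ybar ytil z r y ys : EuclideanSpace ℝ (Fin n))
    (hr : r = f - y)
    (hys : ys = αs • ybar + (1 - αs) • z)
    (hz : ∀ i, z i * ytil i = 1)
    (hytil : ∀ i, ytil i = 1 ∨ ytil i = -1)
    (hmargin : ∀ i, ybar i * ytil i ≥ 1 - 2 * ρ)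
    (hα0 : 0 ≤ αs) (hα1 : αs ≤ 1 / (24 * Real.sqrt n))
    (hsq : 1 / (24 * Real.sqrt n) ≤ 1 / 24)
    (hclose : ‖f - ys‖ ≤ 5 / 8 * (1 - 2 * ρ) + 1 / 24) :
    ∀ i, f i * ytil i ≥ 1 - 2 * αs - 5 / 8 * (1 - 2 * ρ) - 1 / 24 ∧
      1 - 2 * αs - 5 / 8 * (1 - 2 * ρ) - 1 / 24 ≥ (1 - 2 * ρ) / 4 := by
  have hα24 : αs ≤ 1 / 24 := hα1.trans hsq
  intro i
  have hcoord : |f i - ys i| ≤ 5 / 8 * (1 - 2 * ρ) + 1 / 24 := by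
    have := coord_le_norm (f - ys) i
    simpa using this.trans hclose
  have hysi : ys i = αs * ybar i + (1 - αs) * z i := by
    rw [hys]; simp
  have hyt : |ytil i| = 1 := by rcases hytil i with h | h <;> simp [h]
  have hkey : ys i * ytil i ≥ 1 - 2 * αs := by
    rw [hysi, add_mul, mul_assoc, mul_assoc, hz i, mul_one]
    have h1 : αs * (ybar i * ytil i) ≥ αs * (1 - 2 * ρ) :=
      mul_le_mul_of_nonneg_left (hmargin i) hα0
    nlinarith [hρ0]
  have hdiff : (f i - ys i) * ytil i ≥ -(5 / 8 * (1 - 2 * ρ) + 1 / 24) := by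
    have : |(f i - ys i) * ytil i| ≤ 5 / 8 * (1 - 2 * ρ) + 1 / 24 := by
      rw [abs_mul, hyt, mul_one]; exact hcoord
    linarith [neg_abs_le ((f i - ys i) * ytil i)]
  constructor
  · have : f i * ytil i = ys i * ytil i + (f i - ys i) * ytil i := by ring
    linarith
  · nlinarith
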